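/- Let G = (V ∪ {r}, E) with nonnegative weights w, f ∈ E, δ > 0, w' = w + δ·1_f. For a uniformly random permutation σ of V, let x_{σ,k} = OPT({r,σ(1),…,σ(k)}, w) - OPT({r,σ(1),…,σ(k-1)}, w) and x'_{σ,k} defined analogously with w'. Then for every fixed σ, Σ_{k=1}^{|V|} |x'_{σ,k} - x_{σ,k}| ≤ 2δ. -/

import Mathlib

/-- `a` and `b` are connected using the (oriented representatives of) edges in `F`. -/
def EdgeConn {U : Type*} (F : Finset (U × U)) (a b : U) : Prop :=
  Relation.ReflTransGen (fun x y => (x, y) ∈ F ∨ (y, x) ∈ F) a b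

/-- `F` is the edge set of a spanning tree of the subgraph of `(U, Es)` induced
by the vertex set `X`. -/
def IsSpanningTree {U : Type*} (Es : Finset (U × U)) (X : Finset U)
    (F : Finset (U × U)) : Prop :=
  F ⊆ Es ∧ (∀ e ∈ F, e.1 ∈ X ∧ e.2 ∈ X) ∧
    (∀ a ∈ X, ∀ b ∈ X, EdgeConn F a b) ∧ F.card + 1 = X.card

/-- Minimum weight of a spanning tree of the induced subgraph on `X`. -/
noncomputable def OPT {U : Type*} (Es : Finset (U × U)) (X : Finset U)
    (w : U × U → ℝ) : ℝ :=
  sInf {t | ∃ F, IsSpanningTree Es X F ∧ t = ∑ e ∈ F, w e}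
/-- The characteristic function of the minimum spanning tree game:
`ν(S) = OPT(S ∪ {r})`. -/
noncomputable def mstNu {U : Type*} [DecidableEq U] (Es : Finset (U × U)) (r : U)
    (w : U × U → ℝ) (S : Finset U) : ℝ :=
  OPT Es (insert r S) w

/-- The set of agents occupying the first `k` positions of the ordering `σ`. -/
def prefixSet {U : Type*} [Fintype U] [DecidableEq U] (r : U)
    (σ : Fin (Fintype.card {u : U // u ≠ r}) ≃ {u : U // u ≠ r}) (k : ℕ) :
    Finset U :=
  (Finset.univ.filter (fun j : Fin (Fintype.card {u : U // u ≠ r}) => (j : ℕ) < k)).image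
    (fun j => (σ j : U))

/-- The Shapley value of the minimum spanning tree game. -/
noncomputable def mstShapley {U : Type*} [Fintype U] [DecidableEq U]
    (Es : Finset (U × U)) (r : U) (w : U × U → ℝ) (v : {u : U // u ≠ r}) : ℝ :=
  ((Fintype.card {u : U // u ≠ r}).factorial : ℝ)⁻¹ *
    ∑ σ : Fin (Fintype.card {u : U // u ≠ r}) ≃ {u : U // u ≠ r},
      (mstNu Es r w (insert (v : U) (prefixSet r σ (σ.symm v))) -
        mstNu Es r w (prefixSet r σ (σ.symm v)))

/-! Let `h(X) = OPT(X, w + δ·1_f) - OPT(X, w)`; the `k`-th summand is `|h(X_{k+1}) - h(X_k)|`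
for the chain of prefixes `X_k`. One always has `0 ≤ h ≤ δ`, and `h` vanishes while an endpoint
of `f` is missing. Once both endpoints are present, `h` can only decrease along the chain: an
optimal tree on the larger set that uses `f` and an optimal tree on the smaller set that avoids
it exchange an edge. So the total variation is one jump of size at most `δ` followed by a
decrease of total at most `δ`. -/

open Finset

section EdgeConn

variable {U : Type*} {F H : Finset (U × U)} {a b c : U}

theorem EdgeConn.refl (F : Finset (U × U)) (a : U) : EdgeConn F a a :=
  Relation.ReflTransGen.refl

theorem EdgeConn.trans (hab : EdgeConn F a b) (hbc : EdgeConn F b c) : EdgeConn F a c :=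
  Relation.ReflTransGen.trans hab hbc

theorem EdgeConn.symm (h : EdgeConn F a b) : EdgeConn F b a := by
  induction h with
  | refl => exact Relation.ReflTransGen.refl
  | tail _ hbc ih => exact Relation.ReflTransGen.head hbc.symm ih

theorem EdgeConn.of_mem {e : U × U} (he : e ∈ F) : EdgeConn F e.1 e.2 :=
  Relation.ReflTransGen.single (Or.inl he)

theorem EdgeConn.of_edges (h : EdgeConn F a b) (hF : ∀ e ∈ F, EdgeConn H e.1 e.2) :
    EdgeConn H a b :=
  Relation.reflTransGen_closed (fun _ _ hxy => hxy.elim (hF _) fun hyx => (hF _ hyx).symm) _ _ h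

theorem EdgeConn.mono (h : EdgeConn F a b) (hFH : F ⊆ H) : EdgeConn H a b :=
  h.of_edges fun _ he => .of_mem (hFH he)

theorem EdgeConn.filter {P : U → Prop} [DecidablePred P] (hP : ∀ g ∈ F, P g.1 ↔ P g.2)
    (h : EdgeConn F a b) (ha : P a) : EdgeConn (F.filter (P ·.1)) a b := by
  induction h using Relation.ReflTransGen.head_induction_on with
  | refl => exact .refl _ _
  | @head a c hac _ ih =>
    rcases hac with hac | hca
    · have hc : P c := (hP _ hac).mp ha
      exact Relation.ReflTransGen.head (.inl (mem_filter.mpr ⟨hac, ha⟩)) (ih hc)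
    · have hc : P c := (hP _ hca).mpr ha
      exact Relation.ReflTransGen.head (.inr (mem_filter.mpr ⟨hca, hc⟩)) (ih hc)

theorem EdgeConn.eq_of_empty (h : EdgeConn (∅ : Finset (U × U)) a b) : a = b :=
  (Relation.ReflTransGen.cases_head h).resolve_right (by simp)

theorem IsSpanningTree.edgeConn {Es : Finset (U × U)} {X : Finset U}
    (hT : IsSpanningTree Es X F) (ha : a ∈ X) (hb : b ∈ X) : EdgeConn F a b :=
  hT.2.2.1 a ha b hb

end EdgeConn

section Trees

variable {U : Type*} [DecidableEq U] {Es F G : Finset (U × U)} {X : Finset U} {a b : U}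

theorem EdgeConn.cases_of_insert {e : U × U} (h : EdgeConn (insert e F) a b) :
    EdgeConn F a b ∨ (EdgeConn F a e.1 ∧ EdgeConn F e.2 b) ∨
      (EdgeConn F a e.2 ∧ EdgeConn F e.1 b) := by
  induction h with
  | refl => exact .inl (.refl F a)
  | @tail c d _ hcd ih =>
    rcases hcd with hcd | hcd <;> rcases mem_insert.mp hcd with rfl | hcd
    · rcases ih with h | ⟨h, -⟩ | ⟨h, -⟩
      exacts [.inr (.inl ⟨h, .refl F _⟩), .inr (.inl ⟨h, .refl F _⟩), .inl h]
    · have hstep : EdgeConn F c d := .of_mem hcd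
      rcases ih with h | ⟨h₁, h₂⟩ | ⟨h₁, h₂⟩
      exacts [.inl (h.trans hstep), .inr (.inl ⟨h₁, h₂.trans hstep⟩),
        .inr (.inr ⟨h₁, h₂.trans hstep⟩)]
    · rcases ih with h | ⟨h, -⟩ | ⟨h, -⟩
      exacts [.inr (.inr ⟨h, .refl F _⟩), .inl h, .inr (.inr ⟨h, .refl F _⟩)]
    · have hstep : EdgeConn F c d := (EdgeConn.of_mem hcd).symm
      rcases ih with h | ⟨h₁, h₂⟩ | ⟨h₁, h₂⟩
      exacts [.inl (h.trans hstep), .inr (.inl ⟨h₁, h₂.trans hstep⟩),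
        .inr (.inr ⟨h₁, h₂.trans hstep⟩)]

theorem EdgeConn.of_insert {e : U × U} (he : EdgeConn F e.1 e.2)
    (h : EdgeConn (insert e F) a b) : EdgeConn F a b :=
  h.of_edges fun _ hg => (mem_insert.mp hg).elim (fun hge => hge ▸ he) EdgeConn.of_mem

theorem EdgeConn.endpoints_of_insert {e : U × U} (hF : ¬EdgeConn F a b)
    (h : EdgeConn (insert e F) a b) (hFG : F ⊆ G) (hG : EdgeConn G a b) :
    EdgeConn G e.1 e.2 := by
  rcases h.cases_of_insert with h | ⟨h₁, h₂⟩ | ⟨h₁, h₂⟩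
  · exact absurd h hF
  · exact ((h₁.mono hFG).symm.trans hG).trans (h₂.mono hFG).symm
  · exact ((h₂.mono hFG).trans hG.symm).trans (h₁.mono hFG)

/-- Remove an edge `e₀`: the component of `e₀.1` in `F - e₀` and the rest of `X` are each
connected by their own edges. -/
theorem card_le_card_add_one_of_edgeConn (F : Finset (U × U)) (X : Finset U)
    (hX : ∀ a ∈ X, ∀ b ∈ X, EdgeConn F a b) : X.card ≤ F.card + 1 := by
  classical
  induction F using Finset.strongInduction generalizing X with
  | H F ih =>
  rcases F.eq_empty_or_nonempty with rfl | ⟨e₀, he₀⟩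
  · exact (card_le_one.mpr fun a ha b hb => (hX a ha b hb).eq_of_empty).trans le_add_self
  set F' := F.erase e₀
  set P : U → Prop := fun v => EdgeConn F' e₀.1 v
  have hP : ∀ g ∈ F', P g.1 ↔ P g.2 := fun g hg =>
    ⟨fun h => h.trans (.of_mem hg), fun h => h.trans (EdgeConn.of_mem hg).symm⟩
  have hnP : ∀ g ∈ F', ¬P g.1 ↔ ¬P g.2 := fun g hg => not_congr (hP g hg)
  have hF' : F' ⊂ F := erase_ssubset he₀
  have h₁ := ih (F'.filter (P ·.1)) ((filter_subset _ _).trans_ssubset hF') (X.filter P)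
    fun a ha b hb => by
      rw [mem_filter] at ha hb
      exact EdgeConn.filter hP (ha.2.symm.trans hb.2) ha.2
  have h₂ := ih (F'.filter (¬P ·.1)) ((filter_subset _ _).trans_ssubset hF')
    (X.filter (¬P ·)) fun a ha b hb => by
      rw [mem_filter] at ha hb
      have hab := hX a ha.1 b hb.1
      rw [← insert_erase he₀] at hab
      rcases hab.cases_of_insert with h | ⟨h, -⟩ | ⟨-, h⟩
      · exact EdgeConn.filter (P := (¬P ·)) hnP h ha.2
      · exact absurd h.symm ha.2
      · exact absurd h hb.2
  have hX₁₂ := card_filter_add_card_filter_not (s := X) P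
  have hF₁₂ := card_filter_add_card_filter_not (s := F') (P ·.1)
  have hF'card : F'.card + 1 = F.card := card_erase_add_one he₀
  omega

namespace IsSpanningTree

theorem not_edgeConn_erase (hT : IsSpanningTree Es X F) {e : U × U} (he : e ∈ F) :
    ¬EdgeConn (F.erase e) e.1 e.2 := fun hcon => by
  have := card_le_card_add_one_of_edgeConn (F.erase e) X fun a ha b hb => by
    have hab := hT.edgeConn ha hb
    rw [← insert_erase he] at hab
    exact EdgeConn.of_insert hcon hab
  have := card_erase_add_one he
  have := hT.2.2.2
  omega

theorem exchange (hT : IsSpanningTree Es X F) {e g : U × U} (he : e ∈ F) (hg : g ∈ Es)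
    (hg₁ : g.1 ∈ X) (hg₂ : g.2 ∈ X) (hsep : ¬EdgeConn (F.erase e) g.1 g.2) :
    IsSpanningTree Es X (insert g (F.erase e)) := by
  have hgF : g ∉ F.erase e := fun hg => hsep (.of_mem hg)
  have hsub : F.erase e ⊆ insert g (F.erase e) := subset_insert _ _
  have hreconn : EdgeConn (insert g (F.erase e)) e.1 e.2 := by
    refine EdgeConn.endpoints_of_insert hsep ?_ hsub (.of_mem (mem_insert_self _ _))
    rw [insert_erase he]
    exact hT.edgeConn hg₁ hg₂
  refine ⟨?_, ?_, fun a ha b hb => ?_, ?_⟩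
  · exact insert_subset hg ((erase_subset _ _).trans hT.1)
  · intro x hx
    rcases mem_insert.mp hx with rfl | hx
    exacts [⟨hg₁, hg₂⟩, hT.2.1 x (mem_of_mem_erase hx)]
  · refine EdgeConn.of_insert (e := e) hreconn ((hT.edgeConn ha hb).mono ?_)
    rw [insert_comm, insert_erase he]
    exact subset_insert _ _
  · rw [card_insert_of_notMem hgF, card_erase_add_one he, hT.2.2.2]

end IsSpanningTree

theorem exists_mem_not_edgeConn_erase (H : Finset (U × U)) (F : Finset (U × U))
    (hF : ∀ g ∈ F, ¬EdgeConn (F.erase g) g.1 g.2) (hab : EdgeConn F a b)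
    (hH : ¬EdgeConn H a b) :
    ∃ e ∈ F, ¬EdgeConn H e.1 e.2 ∧ ¬EdgeConn (F.erase e) a b := by
  induction F using Finset.strongInduction with
  | H F ih =>
  obtain ⟨e₀, he₀, hHe₀⟩ : ∃ e ∈ F, ¬EdgeConn H e.1 e.2 := by
    by_contra! hall
    exact hH (hab.of_edges hall)
  by_cases hcut : EdgeConn (F.erase e₀) a b
  · have hF' : ∀ g ∈ F.erase e₀, ¬EdgeConn ((F.erase e₀).erase g) g.1 g.2 :=
      fun g hg hcon =>
        hF g (mem_of_mem_erase hg) (hcon.mono (erase_subset_erase _ (erase_subset _ _)))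
    obtain ⟨e, he, hHe, hsep⟩ := ih _ (erase_ssubset he₀) hF' hcut
    refine ⟨e, mem_of_mem_erase he, hHe, fun hcon => hF e (mem_of_mem_erase he) ?_⟩
    refine EdgeConn.endpoints_of_insert hsep ?_ (erase_subset_erase _ (erase_subset _ _)) hcon
    rwa [insert_erase he]
  · exact ⟨e₀, he₀, hHe₀, hcut⟩

end Trees

section OPT

variable {U : Type*} {Es T : Finset (U × U)} {X : Finset U} {w : U × U → ℝ}

theorem finite_setOf_isSpanningTree_sum (Es : Finset (U × U)) (X : Finset U)
    (w : U × U → ℝ) : {t | ∃ T, IsSpanningTree Es X T ∧ t = ∑ e ∈ T, w e}.Finite := by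
  refine (Es.powerset.finite_toSet.image fun T => ∑ e ∈ T, w e).subset ?_
  rintro t ⟨T, hT, rfl⟩
  exact ⟨T, mem_powerset.mpr hT.1, rfl⟩

theorem OPT_le (hT : IsSpanningTree Es X T) : OPT Es X w ≤ ∑ e ∈ T, w e :=
  csInf_le (finite_setOf_isSpanningTree_sum Es X w).bddBelow ⟨T, hT, rfl⟩

theorem exists_isSpanningTree_OPT_eq (hX : ∃ T, IsSpanningTree Es X T) :
    ∃ T, IsSpanningTree Es X T ∧ OPT Es X w = ∑ e ∈ T, w e :=
  let ⟨T, hT⟩ := hX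
  Set.Nonempty.csInf_mem (s := {t | ∃ T, IsSpanningTree Es X T ∧ t = ∑ e ∈ T, w e})
    ⟨_, T, hT, rfl⟩ (finite_setOf_isSpanningTree_sum Es X w)

end OPT

section AddSingle

variable {U : Type*} [DecidableEq U] {Es : Finset (U × U)} {X Y : Finset U}
  {w : U × U → ℝ} {f : U × U} {δ : ℝ}

theorem isSpanningTree_star {r : U} {S : Finset U} (hr : r ∉ S) (hS : ∀ v ∈ S, (r, v) ∈ Es) :
    IsSpanningTree Es (insert r S) (S.image (r, ·)) := by
  have hroot : ∀ a ∈ insert r S, EdgeConn (S.image (r, ·)) r a := fun a ha => by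
    rcases mem_insert.mp ha with rfl | ha
    exacts [.refl _ _, .of_mem (mem_image_of_mem _ ha)]
  refine ⟨?_, ?_, fun a ha b hb => (hroot a ha).symm.trans (hroot b hb), ?_⟩
  · simpa [subset_iff] using hS
  · simpa using fun v hv => mem_insert_of_mem hv
  · rw [card_image_of_injective _ fun _ _ h => congrArg Prod.snd h, card_insert_of_notMem hr]

theorem sum_add_single (T : Finset (U × U)) :
    ∑ e ∈ T, (w + Pi.single f δ : U × U → ℝ) e = ∑ e ∈ T, w e + if f ∈ T then δ else 0 := by
  simp [sum_add_distrib, sum_pi_single']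

theorem OPT_le_OPT_add_single (hδ : 0 ≤ δ) (hX : ∃ T, IsSpanningTree Es X T) :
    OPT Es X w ≤ OPT Es X (w + Pi.single f δ) := by
  obtain ⟨T, hT, hopt⟩ := exists_isSpanningTree_OPT_eq (w := w + Pi.single f δ) hX
  have : 0 ≤ if f ∈ T then δ else 0 := by split_ifs <;> simp [hδ]
  linarith [OPT_le (w := w) hT, sum_add_single (w := w) (f := f) (δ := δ) T]

theorem OPT_add_single_le (hδ : 0 ≤ δ) (hX : ∃ T, IsSpanningTree Es X T) :
    OPT Es X (w + Pi.single f δ) ≤ OPT Es X w + δ := by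
  obtain ⟨T, hT, hopt⟩ := exists_isSpanningTree_OPT_eq (w := w) hX
  have : (if f ∈ T then δ else 0) ≤ δ := by split_ifs <;> simp [hδ]
  linarith [OPT_le (w := w + Pi.single f δ) hT, sum_add_single (w := w) (f := f) (δ := δ) T]

theorem OPT_add_single_of_not_mem (hf : f.1 ∉ X ∨ f.2 ∉ X) :
    OPT Es X (w + Pi.single f δ) = OPT Es X w := by
  unfold OPT
  congr 1
  ext t
  refine exists_congr fun T => and_congr_right fun hT => ?_
  have hfT : f ∉ T := fun hfT => hf.elim (· (hT.2.1 f hfT).1) (· (hT.2.1 f hfT).2)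
  rw [sum_add_single, if_neg hfT, add_zero]

/-- If the optimal tree on `Y` uses `f` but the one on `X` does not, some edge `e` of the latter
can replace `f` in the former and vice versa. -/
theorem OPT_add_single_sub_OPT_le_of_subset (hf : f ∈ Es) (hδ : 0 ≤ δ) (hXY : X ⊆ Y)
    (hf₁ : f.1 ∈ X) (hf₂ : f.2 ∈ X) (hX : ∃ T, IsSpanningTree Es X T)
    (hY : ∃ T, IsSpanningTree Es Y T) :
    OPT Es Y (w + Pi.single f δ) - OPT Es Y w ≤ OPT Es X (w + Pi.single f δ) - OPT Es X w := by
  obtain ⟨TY, hTY, hoY⟩ := exists_isSpanningTree_OPT_eq (w := w) hY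
  obtain ⟨TX, hTX, hoX⟩ := exists_isSpanningTree_OPT_eq (w := w + Pi.single f δ) hX
  rw [hoY, hoX, sum_add_single]
  have hY' := OPT_le (w := w + Pi.single f δ) hTY
  have hX' := OPT_le (w := w) hTX
  rw [sum_add_single] at hY'
  by_cases hfY : f ∈ TY
  swap
  · have : 0 ≤ if f ∈ TX then δ else 0 := by split_ifs <;> simp [hδ]
    rw [if_neg hfY] at hY'
    linarith
  by_cases hfX : f ∈ TX
  · rw [if_pos hfY] at hY'
    rw [if_pos hfX]
    linarith
  obtain ⟨e, heX, hcross, hsep⟩ := exists_mem_not_edgeConn_erase (TY.erase f) TX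
    (fun _ hg => hTX.not_edgeConn_erase hg) (hTX.edgeConn hf₁ hf₂) (hTY.not_edgeConn_erase hfY)
  have hef : e ≠ f := fun h => hfX (h ▸ heX)
  have hTY' :=
    hTY.exchange hfY (hTX.1 heX) (hXY (hTX.2.1 e heX).1) (hXY (hTX.2.1 e heX).2) hcross
  have hTX' := hTX.exchange heX hf hf₁ hf₂ hsep
  have hfTY' : f ∉ insert e (TY.erase f) := by simp [hef.symm]
  have hY'' := OPT_le (w := w + Pi.single f δ) hTY'
  have hX'' := OPT_le (w := w) hTX'
  rw [sum_add_single, if_neg hfTY', sum_insert (fun he => hcross (.of_mem he)),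
    sum_erase_eq_sub hfY] at hY''
  rw [sum_insert (fun h => hfX (mem_of_mem_erase h)), sum_erase_eq_sub heX] at hX''
  rw [if_neg hfX]
  linarith

end AddSingle

theorem sum_range_abs_sub_le_two_mul {h : ℕ → ℝ} {δ : ℝ} (Q : ℕ → Prop) (h₀ : ∀ k, 0 ≤ h k)
    (hδ : ∀ k, h k ≤ δ) (hzero : ∀ k, ¬Q k → h k = 0) (hQ : ∀ k, Q k → Q (k + 1))
    (hanti : ∀ k, Q k → h (k + 1) ≤ h k) (n : ℕ) :
    ∑ k ∈ range n, |h (k + 1) - h k| ≤ 2 * δ := by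
  classical
  have key : ∀ n, ∑ k ∈ range n, |h (k + 1) - h k| + h n ≤ if Q n then 2 * δ else 0 := by
    intro n
    induction n with
    | zero =>
      split_ifs with hQ0
      · simp only [range_zero, sum_empty, zero_add]
        linarith [h₀ 0, hδ 0]
      · simp [hzero 0 hQ0]
    | succ n ih =>
      rw [sum_range_succ]
      by_cases hQn : Q n
      · rw [if_pos hQn] at ih
        rw [if_pos (hQ n hQn), abs_of_nonpos (by linarith [hanti n hQn])]
        linarith
      · rw [if_neg hQn, hzero n hQn] at ih
        rw [hzero n hQn, sub_zero, abs_of_nonneg (h₀ _)]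
        split_ifs with hQn'
        · linarith [hδ (n + 1)]
        · linarith [hzero _ hQn']
  linarith [key n, h₀ n, show (if Q n then 2 * δ else 0) ≤ 2 * δ by
    split_ifs <;> linarith [h₀ 0, hδ 0]]

theorem sum_range_abs_sub_marginals_le {U : Type*} [DecidableEq U] {Es : Finset (U × U)}
    {w : U × U → ℝ} {f : U × U} {δ : ℝ} (hf : f ∈ Es) (hδ : 0 ≤ δ) (X : ℕ → Finset U)
    (hXmono : ∀ k, X k ⊆ X (k + 1)) (hX : ∀ k, ∃ T, IsSpanningTree Es (X k) T) (n : ℕ) :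
    ∑ k ∈ range n,
        |(OPT Es (X (k + 1)) (w + Pi.single f δ) - OPT Es (X k) (w + Pi.single f δ)) -
          (OPT Es (X (k + 1)) w - OPT Es (X k) w)| ≤ 2 * δ := by
  let h k := OPT Es (X k) (w + Pi.single f δ) - OPT Es (X k) w
  calc _ = ∑ k ∈ range n, |h (k + 1) - h k| :=
        sum_congr rfl fun k _ => by rw [sub_sub_sub_comm]
    _ ≤ 2 * δ := sum_range_abs_sub_le_two_mul (fun k => f.1 ∈ X k ∧ f.2 ∈ X k)
      (fun k => sub_nonneg.mpr (OPT_le_OPT_add_single hδ (hX k)))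
      (fun k => sub_le_iff_le_add'.mpr (OPT_add_single_le hδ (hX k)))
      (fun k hk => sub_eq_zero.mpr (OPT_add_single_of_not_mem (not_and_or.mp hk)))
      (fun k hk => ⟨hXmono k hk.1, hXmono k hk.2⟩)
      (fun k hk => OPT_add_single_sub_OPT_le_of_subset hf hδ (hXmono k) hk.1 hk.2 (hX k)
        (hX (k + 1)))
      n

section Prefix

variable {U : Type*} [Fintype U] [DecidableEq U] {r : U}
  {σ : Fin (Fintype.card {u : U // u ≠ r}) ≃ {u : U // u ≠ r}}

theorem ne_of_mem_prefixSet {k : ℕ} {v : U} (hv : v ∈ prefixSet r σ k) : v ≠ r := by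
  obtain ⟨j, -, rfl⟩ := mem_image.mp hv
  exact (σ j).2

theorem prefixSet_mono : Monotone (prefixSet r σ) := fun _ _ hkl =>
  image_subset_image (monotone_filter_right _ fun _ _ hj => lt_of_lt_of_le hj hkl)

end Prefix

theorem stmt_14_general {U : Type*} [Fintype U] [DecidableEq U]
    (Es : Finset (U × U)) (r : U)
    (hstar : ∀ v : U, v ≠ r → (r, v) ∈ Es)
    (w : U × U → ℝ)
    (f : U × U) (hf : f ∈ Es) (δ : ℝ) (hδ : 0 < δ)
    (σ : Fin (Fintype.card {u : U // u ≠ r}) ≃ {u : U // u ≠ r}) :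
    ∑ k ∈ Finset.range (Fintype.card {u : U // u ≠ r}),
        |(mstNu Es r (fun e => if e = f then w e + δ else w e) (prefixSet r σ (k + 1)) -
            mstNu Es r (fun e => if e = f then w e + δ else w e) (prefixSet r σ k)) -
          (mstNu Es r w (prefixSet r σ (k + 1)) - mstNu Es r w (prefixSet r σ k))|
      ≤ 2 * δ := by
  have hw' : (fun e => if e = f then w e + δ else w e) = w + Pi.single f δ := by
    ext e
    by_cases he : e = f <;> simp [he]
  have hX (k : ℕ) : ∃ T, IsSpanningTree Es (insert r (prefixSet r σ k)) T :=
    ⟨_, isSpanningTree_star (fun hr => ne_of_mem_prefixSet hr rfl)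
      fun v hv => hstar v (ne_of_mem_prefixSet hv)⟩
  rw [hw']
  exact sum_range_abs_sub_marginals_le hf hδ.le (fun k => insert r (prefixSet r σ k))
    (fun k => insert_subset_insert r (prefixSet_mono k.le_succ)) hX _

theorem stmt_14 {U : Type*} [Fintype U] [DecidableEq U]
    (Es : Finset (U × U)) (r : U)
    (hstar : ∀ v : U, v ≠ r → (r, v) ∈ Es)
    (w : U × U → ℝ) (hw : ∀ e, 0 ≤ w e)
    (f : U × U) (hf : f ∈ Es) (δ : ℝ) (hδ : 0 < δ)
    (σ : Fin (Fintype.card {u : U // u ≠ r}) ≃ {u : U // u ≠ r}) :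
    ∑ k ∈ Finset.range (Fintype.card {u : U // u ≠ r}),
        |(mstNu Es r (fun e => if e = f then w e + δ else w e) (prefixSet r σ (k + 1)) -
            mstNu Es r (fun e => if e = f then w e + δ else w e) (prefixSet r σ k)) -
          (mstNu Es r w (prefixSet r σ (k + 1)) - mstNu Es r w (prefixSet r σ k))|
      ≤ 2 * δ :=
  stmt_14_general Es r hstar w f hf δ hδ σ
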